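/- If (T, P) is a saturated partition of KA(𝒫), then the pair (M, N) = ( {I | I models all of OB_T}, {I | I models all of OB_P} ) is an MKNF interpretation (i.e., ∅ ≠ N ⊆ M) and (M, N) induces (T, P). -/
import Mathlib


open FirstOrder Language

/-- A (disjunctive MKNF) rule: a nonempty finite head and finite positive/negative bodies,
all consisting of ground atoms (here: sentences of the language `L`). -/
structure MRule (L : Language) where
  head : Finset L.Sentence
  head_nonempty : head.Nonempty
  bodyP : Finset L.Sentence
  bodyN : Finset L.Sentence

/-- `KA(Prog)`: the atoms occurring in rules of the program. -/
def KA {L : Language} (Prog : Set (MRule L)) : Set L.Sentence :=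
  {a | ∃ r ∈ Prog, a ∈ r.head ∨ a ∈ r.bodyP ∨ a ∈ r.bodyN}

/-- `I ⊨ φ` for an interpretation `I` (an `L`-structure with domain `ι`). -/
def models {L : Language} (ι : Type*) (I : L.Structure ι) (φ : L.Sentence) : Prop :=
  @Sentence.Realize L ι I φ

/-- `OB_S ⊨ φ`: every interpretation modelling all of `O ∪ S` models `φ`. -/
def entails {L : Language} (ι : Type*) (O : Set L.Sentence) (S : Set L.Sentence)
    (φ : L.Sentence) : Prop :=
  ∀ I : L.Structure ι, (∀ ψ ∈ O ∪ S, models ι I ψ) → models ι I φ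

/-- `(T, P)` is a saturated partition of `KA(Prog)`: `T ⊆ P ⊆ KA(Prog)`, `OB_P` is
satisfiable, `OB_T ⊭ a` for every `a ∈ KA(Prog) \ T`, and `OB_P ⊭ a` for every
`a ∈ KA(Prog) \ P`. -/
def Saturated {L : Language} (ι : Type*) (O : Set L.Sentence) (Prog : Set (MRule L))
    (T P : Set L.Sentence) : Prop :=
  T ⊆ P ∧ P ⊆ KA Prog ∧
  (∃ I : L.Structure ι, ∀ ψ ∈ O ∪ P, models ι I ψ) ∧
  (∀ a ∈ KA Prog \ T, ¬ entails ι O T a) ∧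
  (∀ a ∈ KA Prog \ P, ¬ entails ι O P a)

/-- If `(T, P)` is a saturated partition of `KA(Prog)`, then
`(M, N) = ({I | I ⊨ OB_T}, {I | I ⊨ OB_P})` is an MKNF interpretation
(`∅ ≠ N ⊆ M`) and `(M, N)` induces `(T, P)`. -/
theorem saturated_gives_inducing_interpretation {L : Language} (ι : Type*)
    (O : Set L.Sentence) (Prog : Set (MRule L)) (hfin : Prog.Finite)
    (T P : Set L.Sentence) (hsat : Saturated ι O Prog T P)
    (M N : Set (L.Structure ι))
    (hM : M = {I : L.Structure ι | ∀ ψ ∈ O ∪ T, models ι I ψ})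
    (hN : N = {I : L.Structure ι | ∀ ψ ∈ O ∪ P, models ι I ψ}) :
    N.Nonempty ∧ N ⊆ M ∧
    T = {a ∈ KA Prog | ∀ I ∈ M, models ι I a} ∧
    P = {a ∈ KA Prog | ∀ J ∈ N, models ι J a} := by
  obtain ⟨hTP, hPKA, ⟨I0, hI0⟩, hT, hP⟩ := hsat
  subst hM hN
  refine ⟨⟨I0, hI0⟩, ?_, ?_, ?_⟩
  · intro J hJ ψ hψ
    exact hJ ψ (hψ.imp_right fun h => hTP h)
  · ext a
    constructor
    · intro ha
      refine ⟨hPKA (hTP ha), fun I hI => hI a (Or.inr ha)⟩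
    · rintro ⟨haKA, hMa⟩
      by_contra haT
      exact hT a ⟨haKA, haT⟩ hMa
  · ext a
    constructor
    · intro ha
      refine ⟨hPKA ha, fun J hJ => hJ a (Or.inr ha)⟩
    · rintro ⟨haKA, hNa⟩
      by_contra haP
      exact hP a ⟨haKA, haP⟩ hNa
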